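/- arXiv:2509.21819 — 5 statements merged into one kernel-verified Lean document; each statement's English description precedes it below -/
import Mathlib

section
/- Let a, κ⁻¹, m be real parameters and μ ≠ 0 real. Define D₁(μ) = cos(μ) - aκ⁻¹·μ·sin(μ), D₀(μ) = 2aκ⁻¹·cos(μ) + (1 - (aκ⁻¹)²μ²)·sin(μ)/μ, and Δ(μ) = D₁(μ) - (m/3)·μ²·D₀(μ). If sin(μ) ≠ 0 and Δ(μ)² = 1, then D₀(μ)·((m/3)·D₁(μ) + sin(μ)/μ - m/3)·((m/3)·D₁(μ) + sin(μ)/μ + m/3) = 0. -/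
/-!
With `k = m/3`, the identity `D₁² = 1 - μ sin μ D₀` turns both `Δ² - 1` and the product of the
last two factors into multiples of `E = k²μ³D₀ - 2kμD₁ - sin μ`:
`Δ² - 1 = μ D₀ E` and `(k D₁ + sin μ / μ)² - k² = -(sin μ / μ²) E`.
Hence `Δ² = 1` forces `D₀ E = 0`, and the target is `-(sin μ / μ²) D₀ E`.
-/

open Real

section FieldIdentities

variable {K : Type*} [Field K] {k s μ D₀ D₁ : K}

lemma sq_sub_one_eq_mul_of_sq_eq_one_sub_mul (hD : D₁ ^ 2 = 1 - μ * s * D₀) :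
    (D₁ - k * μ ^ 2 * D₀) ^ 2 - 1 = μ * D₀ * (k ^ 2 * μ ^ 3 * D₀ - 2 * k * μ * D₁ - s) := by
  linear_combination hD

lemma sq_sub_sq_eq_mul_of_sq_eq_one_sub_mul (hμ : μ ≠ 0) (hD : D₁ ^ 2 = 1 - μ * s * D₀) :
    (k * D₁ + s / μ) ^ 2 - k ^ 2 = -(s / μ ^ 2) * (k ^ 2 * μ ^ 3 * D₀ - 2 * k * μ * D₁ - s) := by
  field_simp
  linear_combination μ ^ 2 * k ^ 2 * hD

lemma mul_mul_eq_zero_of_sq_eq_one_sub_mul (hμ : μ ≠ 0) (hD : D₁ ^ 2 = 1 - μ * s * D₀)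
    (hΔ : (D₁ - k * μ ^ 2 * D₀) ^ 2 = 1) :
    D₀ * (k * D₁ + s / μ - k) * (k * D₁ + s / μ + k) = 0 := by
  have hE : D₀ * (k ^ 2 * μ ^ 3 * D₀ - 2 * k * μ * D₁ - s) = 0 := by
    have h := sq_sub_one_eq_mul_of_sq_eq_one_sub_mul (k := k) hD
    rw [hΔ, sub_self, mul_assoc, eq_comm, mul_eq_zero] at h
    exact h.resolve_left hμ
  calc D₀ * (k * D₁ + s / μ - k) * (k * D₁ + s / μ + k)
      = D₀ * ((k * D₁ + s / μ) ^ 2 - k ^ 2) := by ring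
    _ = -(s / μ ^ 2) * (D₀ * (k ^ 2 * μ ^ 3 * D₀ - 2 * k * μ * D₁ - s)) := by
      rw [sq_sub_sq_eq_mul_of_sq_eq_one_sub_mul hμ hD]; ring
    _ = 0 := by rw [hE, mul_zero]

end FieldIdentities

noncomputable def dispersionD₁ (a κinv μ : ℝ) : ℝ :=
  cos μ - a * κinv * μ * sin μ

noncomputable def dispersionD₀ (a κinv μ : ℝ) : ℝ :=
  2 * a * κinv * cos μ + (1 - (a * κinv) ^ 2 * μ ^ 2) * sin μ / μ

lemma dispersionD₁_sq (a κinv : ℝ) {μ : ℝ} (hμ : μ ≠ 0) :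
    dispersionD₁ a κinv μ ^ 2 = 1 - μ * sin μ * dispersionD₀ a κinv μ := by
  unfold dispersionD₁ dispersionD₀
  field_simp
  linear_combination sin_sq_add_cos_sq μ

theorem band_endpoint_factorization_general (a κinv m μ : ℝ) (hμ : μ ≠ 0)
    (hΔ : ((Real.cos μ - a * κinv * μ * Real.sin μ) -
      (m/3) * μ^2 * (2 * a * κinv * Real.cos μ + (1 - (a * κinv)^2 * μ^2) * Real.sin μ / μ))^2 = 1) :
    (2 * a * κinv * Real.cos μ + (1 - (a * κinv)^2 * μ^2) * Real.sin μ / μ) *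
      ((m/3) * (Real.cos μ - a * κinv * μ * Real.sin μ) + Real.sin μ / μ - m/3) *
      ((m/3) * (Real.cos μ - a * κinv * μ * Real.sin μ) + Real.sin μ / μ + m/3) = 0 :=
  mul_mul_eq_zero_of_sq_eq_one_sub_mul hμ (dispersionD₁_sq a κinv hμ) hΔ

theorem band_endpoint_factorization (a κinv m μ : ℝ) (hμ : μ ≠ 0)
    (hs : Real.sin μ ≠ 0)
    (hΔ : ((Real.cos μ - a * κinv * μ * Real.sin μ) -
      (m/3) * μ^2 * (2 * a * κinv * Real.cos μ + (1 - (a * κinv)^2 * μ^2) * Real.sin μ / μ))^2 = 1) :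
    (2 * a * κinv * Real.cos μ + (1 - (a * κinv)^2 * μ^2) * Real.sin μ / μ) *
      ((m/3) * (Real.cos μ - a * κinv * μ * Real.sin μ) + Real.sin μ / μ - m/3) *
      ((m/3) * (Real.cos μ - a * κinv * μ * Real.sin μ) + Real.sin μ / μ + m/3) = 0 :=
  band_endpoint_factorization_general a κinv m μ hμ hΔ
end

section
/- Conversely to the band-endpoint factorization: let a, κ⁻¹, m ∈ ℝ, μ ≠ 0, and define D₁(μ) = cos(μ) - aκ⁻¹ μ sin(μ), D₀(μ) = 2aκ⁻¹ cos(μ) + (1 - (aκ⁻¹)²μ²) sin(μ)/μ, Δ(μ) = D₁(μ) - (m/3) μ² D₀(μ). If D₀(μ) = 0, then Δ(μ)² = 1. -/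
open Real

theorem sq_cos_sub_mul_sin (c : ℝ) {μ : ℝ} (hμ : μ ≠ 0) :
    (cos μ - c * μ * sin μ) ^ 2 =
      1 - μ * sin μ * (2 * c * cos μ + (1 - c ^ 2 * μ ^ 2) * sin μ / μ) := by
  field_simp
  linear_combination sin_sq_add_cos_sq μ

theorem D0_zero_implies_band_endpoint (a κinv m μ : ℝ) (hμ : μ ≠ 0)
    (hD0 : 2 * a * κinv * Real.cos μ + (1 - (a * κinv)^2 * μ^2) * Real.sin μ / μ = 0) :
    ((Real.cos μ - a * κinv * μ * Real.sin μ) -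
      (m/3) * μ^2 * (2 * a * κinv * Real.cos μ + (1 - (a * κinv)^2 * μ^2) * Real.sin μ / μ))^2 = 1 := by
  have hD1 := sq_cos_sub_mul_sin (a * κinv) hμ
  rw [← mul_assoc 2 a κinv, hD0] at hD1
  rw [hD0, mul_zero, sub_zero, hD1, mul_zero, sub_zero]
end

section
/- Let μ ≠ 0 be real with sin(μ)/μ ≠ 0, and let a, κ⁻¹, m be real. Define D₁, D₀, Δ as before: D₁ = cos μ - aκ⁻¹μ sin μ, D₀ = 2aκ⁻¹cos μ + (1-(aκ⁻¹)²μ²) sin(μ)/μ, Δ = D₁ - (m/3)μ²D₀. Then Δ² = 1 if and only if D₀ = 0, or (m/3)(D₁ - 1) + sin(μ)/μ = 0, or (m/3)(D₁ + 1) + sin(μ)/μ = 0. -/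
open Real

/-!
Writing `D₁ = cos μ - aκ⁻¹ μ sin μ` and `D₀` as in the statement, the Pythagorean identity gives
`D₁² = 1 - μ sin μ · D₀`. Under this relation alone, `s (Δ² - 1)` factors as
`-μ² D₀ (k (D₁ - 1) + s) (k (D₁ + 1) + s)` with `s = sin μ / μ` and `k = m / 3`,
so for `s ≠ 0` and `μ ≠ 0` the equation `Δ² = 1` splits into the three listed cases.
-/

theorem mul_sq_sub_mul_sub_one_eq {R : Type*} [CommRing R] {D₀ D₁ s k r : R}
    (hD : D₁ ^ 2 = 1 - r * s * D₀) :
    s * ((D₁ - k * r * D₀) ^ 2 - 1) = -(r * D₀ * ((k * (D₁ - 1) + s) * (k * (D₁ + 1) + s))) := by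
  linear_combination (s + k ^ 2 * r * D₀) * hD

theorem sq_sub_mul_eq_one_iff {R : Type*} [CommRing R] [IsDomain R] {D₀ D₁ s k r : R}
    (hr : r ≠ 0) (hs : s ≠ 0) (hD : D₁ ^ 2 = 1 - r * s * D₀) :
    (D₁ - k * r * D₀) ^ 2 = 1 ↔ D₀ = 0 ∨ k * (D₁ - 1) + s = 0 ∨ k * (D₁ + 1) + s = 0 := by
  rw [← sub_eq_zero, ← mul_right_inj' hs, mul_zero, mul_sq_sub_mul_sub_one_eq hD]
  simp only [neg_eq_zero, mul_eq_zero, hr, false_or]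

theorem cos_sub_mul_sin_sq (a κinv μ : ℝ) (hμ : μ ≠ 0) :
    (cos μ - a * κinv * μ * sin μ) ^ 2 =
      1 - μ ^ 2 * (sin μ / μ) * (2 * a * κinv * cos μ + (1 - (a * κinv) ^ 2 * μ ^ 2) * sin μ / μ) := by
  field_simp
  linear_combination sin_sq_add_cos_sq μ

theorem band_endpoint_characterization (a κinv m μ : ℝ) (hμ : μ ≠ 0)
    (hs : Real.sin μ / μ ≠ 0) :
    (((Real.cos μ - a * κinv * μ * Real.sin μ) -
        (m/3) * μ^2 * (2 * a * κinv * Real.cos μ + (1 - (a * κinv)^2 * μ^2) * Real.sin μ / μ))^2 = 1)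
    ↔ (2 * a * κinv * Real.cos μ + (1 - (a * κinv)^2 * μ^2) * Real.sin μ / μ = 0 ∨
       (m/3) * ((Real.cos μ - a * κinv * μ * Real.sin μ) - 1) + Real.sin μ / μ = 0 ∨
       (m/3) * ((Real.cos μ - a * κinv * μ * Real.sin μ) + 1) + Real.sin μ / μ = 0) :=
  sq_sub_mul_eq_one_iff (pow_ne_zero 2 hμ) hs (cos_sub_mul_sin_sq a κinv μ hμ)
end

section
/- Let a > 0, κ⁻¹ > 0. The set Σ₀ of positive reals λ such that (1 - (aκ⁻¹)²(λ/a))·sin(√(λ/a))/√(λ/a) + 2aκ⁻¹·cos(√(λ/a)) = 0 is infinite. -/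
/-!
With `c = aκ⁻¹` and `μ = √(λ/a)`, multiplying the condition by `μ` gives
`g μ = (1 - c²μ²) sin μ + 2cμ cos μ = 0` (`g = semiRigidChar c`). At `μ = kπ` the sine vanishes,
so `g (kπ) = 2ckπ(-1)ᵏ` weakly alternates in sign for every real `c`, and the intermediate value theorem yields a root in every `[kπ, (k+1)π]`.
The roots are therefore unbounded, and `μ ↦ aμ²` maps them injectively into `Σ₀`.
-/

open Real Set

theorem zero_mem_uIcc_of_mul_nonpos {α : Type*} [Ring α] [LinearOrder α] [IsStrictOrderedRing α]
    {x y : α} (h : x * y ≤ 0) : 0 ∈ uIcc x y := by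
  rw [mem_uIcc]
  rcases mul_nonpos_iff.1 h with h | h <;> tauto

noncomputable def semiRigidChar (c μ : ℝ) : ℝ :=
  (1 - c ^ 2 * μ ^ 2) * sin μ + 2 * c * μ * cos μ

theorem continuous_semiRigidChar (c : ℝ) : Continuous (semiRigidChar c) := by
  unfold semiRigidChar
  fun_prop

theorem semiRigidChar_nat_mul_pi (c : ℝ) (k : ℕ) :
    semiRigidChar c (k * π) = 2 * c * k * π * (-1) ^ k := by
  rw [semiRigidChar, sin_nat_mul_pi, cos_nat_mul_pi]
  ring

theorem semiRigidChar_mul_succ_nonpos (c : ℝ) (k : ℕ) :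
    semiRigidChar c (k * π) * semiRigidChar c ((k + 1 : ℕ) * π) ≤ 0 := by
  rw [semiRigidChar_nat_mul_pi, semiRigidChar_nat_mul_pi]
  have h : 2 * c * k * π * (-1) ^ k * (2 * c * (k + 1 : ℕ) * π * (-1) ^ (k + 1))
      = -((2 * c * π) ^ 2 * (k * (k + 1)) * ((-1) ^ k) ^ 2) := by
    push_cast
    ring
  rw [h, neg_nonpos]
  positivity

theorem exists_semiRigidChar_eq_zero_mem_Icc (c : ℝ) (k : ℕ) :
    ∃ μ ∈ Icc (k * π) ((k + 1 : ℕ) * π), semiRigidChar c μ = 0 := by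
  have hle : (k : ℝ) * π ≤ (k + 1 : ℕ) * π := by gcongr; omega
  rw [← uIcc_of_le hle]
  exact intermediate_value_uIcc (continuous_semiRigidChar c).continuousOn
    (zero_mem_uIcc_of_mul_nonpos (semiRigidChar_mul_succ_nonpos c k))

theorem not_bddAbove_pos_roots_semiRigidChar (c : ℝ) :
    ¬BddAbove {μ : ℝ | 0 < μ ∧ semiRigidChar c μ = 0} := by
  rintro ⟨B, hB⟩
  obtain ⟨k, hk⟩ := exists_nat_gt (max B 0 / π)
  obtain ⟨μ, ⟨hkμ, -⟩, hroot⟩ := exists_semiRigidChar_eq_zero_mem_Icc c k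
  have hBμ : max B 0 < μ := by
    rw [div_lt_iff₀ pi_pos] at hk
    linarith
  exact (hB ⟨(le_max_right B 0).trans_lt hBμ, hroot⟩).not_gt ((le_max_left B 0).trans_lt hBμ)

theorem semiRigidCondition_mul_sq (a κinv μ : ℝ) (ha : a ≠ 0) (hμ : 0 < μ) :
    (1 - (a * κinv) ^ 2 * (a * μ ^ 2 / a)) * sin (√(a * μ ^ 2 / a)) / √(a * μ ^ 2 / a) +
      2 * a * κinv * cos (√(a * μ ^ 2 / a)) = semiRigidChar (a * κinv) μ / μ := by
  have hdiv : a * μ ^ 2 / a = μ ^ 2 := by field_simp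
  rw [hdiv, sqrt_sq hμ.le, semiRigidChar]
  field_simp

theorem Sigma0_infinite_general (a κinv : ℝ) (ha : 0 < a) :
    {lam : ℝ | 0 < lam ∧
      (1 - (a * κinv)^2 * (lam/a)) * Real.sin (Real.sqrt (lam/a)) / Real.sqrt (lam/a) +
        2 * a * κinv * Real.cos (Real.sqrt (lam/a)) = 0}.Infinite := by
  have hroots := infinite_of_not_bddAbove (not_bddAbove_pos_roots_semiRigidChar (a * κinv))
  have hinj : InjOn (fun μ : ℝ => a * μ ^ 2) {μ | 0 < μ ∧ semiRigidChar (a * κinv) μ = 0} :=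
    fun μ hμ ν hν h => (pow_left_inj₀ hμ.1.le hν.1.le two_ne_zero).1
      (mul_left_cancel₀ ha.ne' h)
  refine (hroots.image hinj).mono ?_
  rintro _ ⟨μ, ⟨hμ, hroot⟩, rfl⟩
  refine ⟨by positivity, ?_⟩
  rw [semiRigidCondition_mul_sq a κinv μ ha.ne' hμ, hroot, zero_div]

theorem Sigma0_infinite (a κinv : ℝ) (ha : 0 < a) (hκ : 0 < κinv) :
    {lam : ℝ | 0 < lam ∧
      (1 - (a * κinv)^2 * (lam/a)) * Real.sin (Real.sqrt (lam/a)) / Real.sqrt (lam/a) +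
        2 * a * κinv * Real.cos (Real.sqrt (lam/a)) = 0}.Infinite :=
  Sigma0_infinite_general a κinv ha
end

section
/- Borg-type gap existence: let a = 1, κ⁻¹ = 0, and m > 0. Then the free discriminant Δ(λ) = cos(√λ) - (m/3)·λ·sin(√λ)/√λ satisfies |Δ(λ)| > 1 for some λ > 0; i.e., the free hexagonal-lattice operator with concentrated mass m > 0 has a nonempty spectral gap in (0,∞). -/
/-!
Writing `λ = μ²`, the discriminant becomes `cos μ - (m/3) μ sin μ`. At the points
`μ = π/2 + 2πk` the cosine vanishes and the sine is `1`, so there `Δ = -(m/3) μ`,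
which is below `-1` as soon as `μ > 3/m`.
-/

open Real

noncomputable def freeDiscriminant (m lam : ℝ) : ℝ :=
  cos (√lam) - (m / 3) * lam * sin (√lam) / √lam

theorem freeDiscriminant_sq (m : ℝ) {μ : ℝ} (hμ : 0 ≤ μ) :
    freeDiscriminant m (μ ^ 2) = cos μ - m / 3 * μ * sin μ := by
  rw [freeDiscriminant, sqrt_sq hμ]
  rcases hμ.eq_or_lt with rfl | hμ
  · simp
  · field_simp

theorem freeDiscriminant_pi_div_two_add (m : ℝ) (k : ℕ) :
    freeDiscriminant m ((π / 2 + k * (2 * π)) ^ 2) = -(m / 3 * (π / 2 + k * (2 * π))) := by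
  rw [freeDiscriminant_sq m (by positivity), cos_add_nat_mul_two_pi, sin_add_nat_mul_two_pi,
    cos_pi_div_two, sin_pi_div_two]
  ring

theorem borg_gap_exists (m : ℝ) (hm : 0 < m) :
    ∃ lam : ℝ, 0 < lam ∧
      |Real.cos (Real.sqrt lam) - (m/3) * lam * Real.sin (Real.sqrt lam) / Real.sqrt lam| > 1 := by
  obtain ⟨k, hk⟩ := exists_nat_gt (3 / m)
  have hμ : 3 / m < π / 2 + k * (2 * π) := by
    nlinarith [pi_gt_three, k.cast_nonneg (α := ℝ)]
  refine ⟨(π / 2 + k * (2 * π)) ^ 2, by positivity, ?_⟩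
  change 1 < |freeDiscriminant m _|
  rw [freeDiscriminant_pi_div_two_add, abs_neg, abs_of_pos (by positivity)]
  rw [div_lt_iff₀ hm] at hμ
  linarith
end
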